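/- Let F(x) := ∑_{n≤x} μ(n)·log(x/n) and Λ₂⁻ := Λ*Λ − Λ·log. Then F(x)·(log x)² = ∑_{n≤x} Λ₂⁻(n)·F(x/n) + O(x·log x) as x → ∞. -/

import Mathlib

/-!
The map `f ↦ log · f` is a derivation of the ring of arithmetic functions. Applied to
`ζ * μ = 1` it gives `log · μ = -(μ * Λ)`, and applied once more
`log² · μ = (Λ * Λ - log · Λ) * μ`. Expanding `F (x / n)` and regrouping by `k = n m`,
`∑_{n ≤ x} Λ₂⁻(n) F(x/n) = ∑_{k ≤ x} μ(k) log² k · log (x/k)`, so the difference in question is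
`∑_{k ≤ x} μ(k) log² (x/k) (log x + log k)`. Since `log² t ≤ 16 √t` and `∑_{k ≤ x} k^{-1/2} ≤ 2 √x`,
this is at most `64 x log x`.
-/

open Finset

section Analytic

open Real

theorem Real.log_sq_le_sixteen_mul_sqrt {t : ℝ} (ht : 1 ≤ t) : log t ^ 2 ≤ 16 * √t := by
  have h := log_le_rpow_div (by linarith : 0 ≤ t) (by norm_num : (0:ℝ) < 1 / 4)
  calc log t ^ 2 ≤ (t ^ (1 / 4 : ℝ) / (1 / 4)) ^ 2 := pow_le_pow_left₀ (log_nonneg ht) h 2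
    _ = 16 * √t := by
      rw [sqrt_eq_rpow, div_pow, ← rpow_natCast, ← rpow_mul (by linarith)]
      norm_num
      ring

theorem sum_Icc_inv_sqrt_le (N : ℕ) : ∑ n ∈ Icc 1 N, (√n)⁻¹ ≤ 2 * √N := by
  induction N with
  | zero => simp
  | succ N ih =>
    rw [sum_Icc_succ_top (by omega), Nat.cast_succ]
    have hN : √N ^ 2 = N := sq_sqrt N.cast_nonneg
    have hN1 : √(N + 1) ^ 2 = N + 1 := sq_sqrt (by positivity)
    have hpos : 0 < √(N + 1) := sqrt_pos.mpr (by positivity)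
    have : (√(N + 1))⁻¹ ≤ 2 * √(N + 1) - 2 * √N := by
      rw [inv_le_iff_one_le_mul₀ hpos]
      nlinarith [sq_nonneg (√(N + 1) - √N), sqrt_nonneg N]
    linarith

theorem sum_Icc_floor_log_div_sq_le {x : ℝ} (hx : 0 ≤ x) :
    ∑ n ∈ Icc 1 ⌊x⌋₊, log (x / n) ^ 2 ≤ 32 * x := by
  calc ∑ n ∈ Icc 1 ⌊x⌋₊, log (x / n) ^ 2 ≤ ∑ n ∈ Icc 1 ⌊x⌋₊, 16 * √x * (√n)⁻¹ := by
        refine sum_le_sum fun n hn => ?_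
        obtain ⟨hn1, hnx⟩ := mem_Icc.mp hn
        have hn0 : (0 : ℝ) < n := by exact_mod_cast hn1
        have hxn : 1 ≤ x / n :=
          (one_le_div hn0).mpr ((Nat.cast_le.mpr hnx).trans (Nat.floor_le hx))
        rw [mul_assoc, ← div_eq_mul_inv, ← sqrt_div' _ hn0.le]
        exact log_sq_le_sixteen_mul_sqrt hxn
    _ ≤ 16 * √x * (2 * √⌊x⌋₊) := by
        rw [← mul_sum]
        gcongr
        exact sum_Icc_inv_sqrt_le _
    _ ≤ 16 * √x * (2 * √x) := by gcongr; exact Nat.floor_le hx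
    _ = 32 * x := by rw [mul_mul_mul_comm, mul_self_sqrt hx]; ring

theorem abs_sum_Icc_floor_mul_log_div_sq_mul_le {a : ℕ → ℝ} (ha : ∀ n, |a n| ≤ 1) {x : ℝ}
    (hx : 1 ≤ x) :
    |∑ n ∈ Icc 1 ⌊x⌋₊, a n * log (x / n) ^ 2 * (log x + log n)| ≤ 64 * (x * log x) := by
  have hx0 : 0 < x := by linarith
  calc |∑ n ∈ Icc 1 ⌊x⌋₊, a n * log (x / n) ^ 2 * (log x + log n)|
      ≤ ∑ n ∈ Icc 1 ⌊x⌋₊, log (x / n) ^ 2 * (2 * log x) := by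
        refine (abs_sum_le_sum_abs _ _).trans (sum_le_sum fun n hn => ?_)
        obtain ⟨hn1, hnx⟩ := mem_Icc.mp hn
        have hn : (1 : ℝ) ≤ n := by exact_mod_cast hn1
        have hlogn : log n ≤ log x :=
          log_le_log (by linarith) ((Nat.cast_le.mpr hnx).trans (Nat.floor_le hx0.le))
        rw [abs_mul, abs_mul, abs_of_nonneg (sq_nonneg (log (x / n))),
          abs_of_nonneg (add_nonneg (log_nonneg hx) (log_nonneg hn))]
        gcongr
        · exact add_nonneg (log_nonneg hx) (log_nonneg hn)
        · exact mul_le_of_le_one_left (sq_nonneg _) (ha n)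
        · linarith
    _ = 2 * log x * ∑ n ∈ Icc 1 ⌊x⌋₊, log (x / n) ^ 2 := by rw [← sum_mul, mul_comm]
    _ ≤ 2 * log x * (32 * x) := by
        gcongr
        · exact mul_nonneg zero_le_two (log_nonneg hx)
        · exact sum_Icc_floor_log_div_sq_le hx0.le
    _ = 64 * (x * log x) := by ring

end Analytic

namespace ArithmeticFunction

open scoped ArithmeticFunction.Moebius ArithmeticFunction.zeta

theorem log_pmul_mul (f g : ArithmeticFunction ℝ) :
    log.pmul (f * g) = log.pmul f * g + f * log.pmul g := by
  ext n
  simp only [pmul_apply, mul_apply, add_apply, log_apply, mul_sum, ← sum_add_distrib]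
  refine sum_congr rfl fun p hp => ?_
  obtain ⟨rfl, hn⟩ := Nat.mem_divisorsAntidiagonal.mp hp
  obtain ⟨ha, hb⟩ := mul_ne_zero_iff.mp hn
  rw [Nat.cast_mul, Real.log_mul (by exact_mod_cast ha) (by exact_mod_cast hb)]
  ring

theorem log_pmul_moebius :
    log.pmul (μ : ArithmeticFunction ℝ) = -((μ : ArithmeticFunction ℝ) * Λ) := by
  have hζμ : Λ + (ζ : ArithmeticFunction ℝ) * log.pmul μ = 0 := by
    have h := congrArg log.pmul (coe_zeta_mul_coe_moebius (R := ℝ))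
    rwa [log_pmul_mul, pmul_zeta, log_mul_moebius_eq_vonMangoldt,
      show log.pmul (1 : ArithmeticFunction ℝ) = 0 by ext (_ | _ | n) <;> simp [pmul_apply]] at h
  calc log.pmul (μ : ArithmeticFunction ℝ) = μ * ζ * log.pmul μ := by
        rw [coe_moebius_mul_coe_zeta, one_mul]
    _ = μ * (Λ + ζ * log.pmul μ) - μ * Λ := by ring
    _ = -(μ * Λ) := by rw [hζμ]; ring

theorem log_pmul_log_pmul_moebius :
    log.pmul (log.pmul (μ : ArithmeticFunction ℝ)) = (Λ * Λ - log.pmul Λ) * μ := by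
  have log_pmul_neg (f : ArithmeticFunction ℝ) : log.pmul (-f) = -log.pmul f := by
    ext n; simp [pmul_apply]
  rw [log_pmul_moebius, log_pmul_neg, log_pmul_mul, log_pmul_moebius]
  ring

theorem sum_Icc_mul_mul_eq_sum_sum {R : Type*} [Semiring R] (f g : ArithmeticFunction R)
    (w : ℕ → R) (N : ℕ) :
    ∑ k ∈ Icc 1 N, (f * g) k * w k
      = ∑ n ∈ Icc 1 N, f n * ∑ m ∈ Icc 1 (N / n), g m * w (n * m) := by
  simp only [mul_apply, sum_mul, mul_sum, sum_sigma']
  refine sum_nbij' (fun p => ⟨p.2.1, p.2.2⟩) (fun p => ⟨p.1 * p.2, p.1, p.2⟩) ?_ ?_ ?_ ?_ ?_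
  · rintro ⟨k, a, b⟩ h
    simp only [mem_sigma, mem_Icc, Nat.mem_divisorsAntidiagonal] at h ⊢
    obtain ⟨⟨hk, hkN⟩, rfl, hk0⟩ := h
    obtain ⟨ha, hb⟩ := mul_ne_zero_iff.mp hk0
    refine ⟨⟨by omega, le_trans (Nat.le_mul_of_pos_right a (by omega)) hkN⟩, by omega, ?_⟩
    rw [Nat.le_div_iff_mul_le (by omega), mul_comm]
    exact hkN
  · rintro ⟨n, m⟩ h
    simp only [mem_sigma, mem_Icc, Nat.mem_divisorsAntidiagonal] at h ⊢
    obtain ⟨⟨hn, -⟩, hm, hmN⟩ := h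
    refine ⟨⟨Nat.one_le_iff_ne_zero.mpr (by positivity), ?_⟩, trivial, by positivity⟩
    rwa [Nat.le_div_iff_mul_le (by omega), mul_comm] at hmN
  · rintro ⟨k, a, b⟩ h
    simp only [mem_sigma, Nat.mem_divisorsAntidiagonal] at h
    simp [h.2.1]
  · rintro ⟨n, m⟩ h; rfl
  · rintro ⟨k, a, b⟩ h
    simp only [mem_sigma, Nat.mem_divisorsAntidiagonal] at h
    rw [h.2.1, mul_assoc]

theorem sum_Icc_floor_vonMangoldt_sq_sub_mul_sum_moebius_log (x : ℝ) :
    ∑ n ∈ Icc 1 ⌊x⌋₊,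
        (Λ * Λ - log.pmul Λ) n * ∑ m ∈ Icc 1 ⌊x / n⌋₊, (μ m : ℝ) * Real.log (x / n / m)
      = ∑ k ∈ Icc 1 ⌊x⌋₊, (μ k : ℝ) * Real.log k ^ 2 * Real.log (x / k) := by
  simp_rw [Nat.floor_div_natCast, div_div, ← Nat.cast_mul, ← intCoe_apply]
  rw [← sum_Icc_mul_mul_eq_sum_sum (g := (μ : ArithmeticFunction ℝ))
    (w := fun k => Real.log (x / k)), ← log_pmul_log_pmul_moebius]
  refine sum_congr rfl fun k _ => ?_
  simp only [pmul_apply, log_apply]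
  ring

end ArithmeticFunction

open ArithmeticFunction Filter Asymptotics
open scoped ArithmeticFunction.Moebius

theorem F_log_sq_eq
    (F : ℝ → ℝ)
    (hF : ∀ x, F x = ∑ n ∈ Finset.Icc 1 ⌊x⌋₊, (μ n : ℝ) * Real.log (x / n))
    (Λ₂m : ℕ → ℝ)
    (hΛ₂m : ∀ n, Λ₂m n = (∑ d ∈ n.divisors, Λ d * Λ (n / d)) - Λ n * Real.log n) :
    (fun x : ℝ =>
        F x * (Real.log x)^2 - ∑ n ∈ Finset.Icc 1 ⌊x⌋₊, Λ₂m n * F (x / n))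
      =O[atTop] (fun x : ℝ => x * Real.log x) := by
  have hΛ₂m_eq : Λ₂m = ⇑(Λ * Λ - log.pmul Λ) := by
    ext n
    rw [hΛ₂m, show (Λ * Λ - log.pmul Λ) n = (Λ * Λ) n - log.pmul Λ n from rfl, mul_apply,
      Nat.sum_divisorsAntidiagonal (fun a b => Λ a * Λ b), pmul_apply, log_apply, mul_comm]
  refine isBigO_iff.mpr ⟨64, ?_⟩
  filter_upwards [eventually_ge_atTop 1] with x hx
  have hx0 : 0 < x := by linarith
  have hdiff : F x * Real.log x ^ 2 - ∑ n ∈ Icc 1 ⌊x⌋₊, Λ₂m n * F (x / n)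
      = ∑ n ∈ Icc 1 ⌊x⌋₊, (μ n : ℝ) * Real.log (x / n) ^ 2 * (Real.log x + Real.log n) := by
    simp only [hF, hΛ₂m_eq, sum_Icc_floor_vonMangoldt_sq_sub_mul_sum_moebius_log, sum_mul,
      ← sum_sub_distrib]
    refine sum_congr rfl fun n hn => ?_
    have hn0 : (n : ℝ) ≠ 0 := by have := (mem_Icc.mp hn).1; positivity
    rw [Real.log_div hx0.ne' hn0]
    ring
  rw [Real.norm_of_nonneg (mul_nonneg hx0.le (Real.log_nonneg hx)), Real.norm_eq_abs, hdiff]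
  refine abs_sum_Icc_floor_mul_log_div_sq_mul_le (fun n => ?_) hx
  exact_mod_cast abs_moebius_le_one
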